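/- arXiv:1106.0893 — 4 statements merged into one kernel-verified Lean document; each statement's English description precedes it below -/
import Mathlib

section
/- Suppose G̃^i, G^i are (2,0)-homogeneous functions of η, B^i is (1,1)-homogeneous, P is a smooth complex-valued function, and G̃^i = G^i + B^i + P η^i for all η ≠ 0 and all i. Then for every i: G̃^i = G^i + ((∑_k η^k ∂P/∂η^k) η^i), B^i = −(∑_k η̄^k ∂P/∂η̄^k) η^i, and ∑_k η^k ∂P/∂η^k + ∑_k η̄^k ∂P/∂η̄^k = P. -/
open Complex BigOperators

/-- Wirtinger derivative `∂f/∂η^k` of `f : ℂⁿ → ℂ` at `η`. -/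
noncomputable def wdz {n : ℕ} (f : (Fin n → ℂ) → ℂ) (η : Fin n → ℂ) (k : Fin n) : ℂ :=
  (1 / 2) * (fderiv ℝ f η (Pi.single k 1) - Complex.I * fderiv ℝ f η (Pi.single k Complex.I))

/-- Conjugate Wirtinger derivative `∂f/∂η̄^k` of `f : ℂⁿ → ℂ` at `η`. -/
noncomputable def wdzbar {n : ℕ} (f : (Fin n → ℂ) → ℂ) (η : Fin n → ℂ) (k : Fin n) : ℂ :=
  (1 / 2) * (fderiv ℝ f η (Pi.single k 1) + Complex.I * fderiv ℝ f η (Pi.single k Complex.I))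


/-- Lemma 3.1, direct direction, on a fiber: if `G̃^i, G^i` are
`(2,0)`-homogeneous, `B^i` is `(1,1)`-homogeneous, `P` is smooth, and
`G̃^i = G^i + B^i + P η^i`, then `G̃^i = G^i + ((η^k ∂_k P) η^i)`,
`B^i = −(η̄^k ∂_{k̄} P) η^i` and `η^k ∂_k P + η̄^k ∂_{k̄} P = P`. -/
theorem projective_change_decomposition {n : ℕ}
    (Gt G B : Fin n → (Fin n → ℂ) → ℂ) (P : (Fin n → ℂ) → ℂ)
    (hGt : ∀ i, ContDiffOn ℝ (⊤ : ℕ∞) (Gt i) {η : Fin n → ℂ | η ≠ 0})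
    (hG : ∀ i, ContDiffOn ℝ (⊤ : ℕ∞) (G i) {η : Fin n → ℂ | η ≠ 0})
    (hB : ∀ i, ContDiffOn ℝ (⊤ : ℕ∞) (B i) {η : Fin n → ℂ | η ≠ 0})
    (hP : ContDiffOn ℝ (⊤ : ℕ∞) P {η : Fin n → ℂ | η ≠ 0})
    (hGthom : ∀ i, ∀ (lam : ℂ), lam ≠ 0 → ∀ (η : Fin n → ℂ), η ≠ 0 →
      Gt i (lam • η) = lam ^ 2 * Gt i η)
    (hGhom : ∀ i, ∀ (lam : ℂ), lam ≠ 0 → ∀ (η : Fin n → ℂ), η ≠ 0 →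
      G i (lam • η) = lam ^ 2 * G i η)
    (hBhom : ∀ i, ∀ (lam : ℂ), lam ≠ 0 → ∀ (η : Fin n → ℂ), η ≠ 0 →
      B i (lam • η) = lam * (starRingEnd ℂ lam) * B i η)
    (hrel : ∀ (η : Fin n → ℂ), η ≠ 0 → ∀ i, Gt i η = G i η + B i η + P η * η i) :
    ∀ (η : Fin n → ℂ), η ≠ 0 →
      (∀ i, Gt i η = G i η + (∑ k, η k * wdz P η k) * η i) ∧
      (∀ i, B i η = -(∑ k, (starRingEnd ℂ) (η k) * wdzbar P η k) * η i) ∧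
      (∑ k, η k * wdz P η k) + (∑ k, (starRingEnd ℂ) (η k) * wdzbar P η k) = P η := by
  intro η hη
  have hopen : IsOpen {η : Fin n → ℂ | η ≠ 0} := isOpen_ne
  have hPd : DifferentiableAt ℝ P η :=
    (hP.contDiffAt (hopen.mem_nhds hη)).differentiableAt (by simp)
  set S := ∑ k, η k * wdz P η k with hSdef
  set T := ∑ k, (starRingEnd ℂ) (η k) * wdzbar P η k with hTdef
  have expand : ∀ v : Fin n → ℂ,
      fderiv ℝ P η v = ∑ k, (v k * wdz P η k + (starRingEnd ℂ) (v k) * wdzbar P η k) := by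
    intro v
    have hv : (∑ k, Pi.single k (v k) : Fin n → ℂ) = v := Finset.univ_sum_single v
    conv_lhs => rw [← hv]
    rw [map_sum]
    refine Finset.sum_congr rfl fun k _ => ?_
    have hsingle : (Pi.single k (v k) : Fin n → ℂ)
        = (v k).re • (Pi.single k (1 : ℂ) : Fin n → ℂ)
          + (v k).im • (Pi.single k Complex.I : Fin n → ℂ) := by
      funext j
      by_cases h : j = k
      · subst h
        simp [Complex.real_smul, Complex.re_add_im]
      · simp [Pi.single_eq_of_ne h]
    rw [hsingle, map_add, map_smul, map_smul]
    set D1 := fderiv ℝ P η (Pi.single k (1 : ℂ)) with hD1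
    set DI := fderiv ℝ P η (Pi.single k Complex.I) with hDI
    have h1 : (v k) = ((v k).re : ℂ) + (v k).im * Complex.I := (Complex.re_add_im _).symm
    have h2 : (starRingEnd ℂ) (v k) = ((v k).re : ℂ) - (v k).im * Complex.I := by
      simp [Complex.ext_iff]
    simp only [wdz, wdzbar, ← hD1, ← hDI, Complex.real_smul]
    linear_combination (-(1 / 2 : ℂ) * (D1 - Complex.I * DI)) * h1 +
      (-(1 / 2 : ℂ) * (D1 + Complex.I * DI)) * h2 + (((v k).im : ℂ) * DI) * Complex.I_sq
  set L : ℂ →L[ℝ] (Fin n → ℂ) := (ContinuousLinearMap.id ℝ ℂ).smulRight η with hLdef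
  have hcomp : HasFDerivAt (fun lam : ℂ => P (lam • η)) ((fderiv ℝ P η).comp L) 1 := by
    have h1 : HasFDerivAt P (fderiv ℝ P η) (L 1) := by
      have : L 1 = η := by simp [hLdef]
      rw [this]; exact hPd.hasFDerivAt
    have h2 := h1.comp (1 : ℂ) L.hasFDerivAt
    exact h2
  have main : ∀ i, (S + T) * η i = P η * η i ∧ 2 * B i η = (S - T - P η) * η i := by
    intro i
    have star : ∀ lam : ℂ, lam ≠ 0 →
        P (lam • η) * η i = lam * P η * η i + (lam - (starRingEnd ℂ) lam) * B i η := by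
      intro lam hlam
      have e1 := hrel (lam • η) (smul_ne_zero hlam hη) i
      rw [hGthom i lam hlam η hη, hGhom i lam hlam η hη, hBhom i lam hlam η hη] at e1
      have hsm : (lam • η) i = lam * η i := rfl
      rw [hsm] at e1
      have e2 := hrel η hη i
      refine mul_left_cancel₀ hlam ?_
      linear_combination lam ^ 2 * e2 - e1
    have hF1 := hcomp.mul_const (η i)
    have hconj : HasFDerivAt (fun lam : ℂ => (starRingEnd ℂ) lam)
        (Complex.conjCLE : ℂ →L[ℝ] ℂ) 1 := Complex.conjCLE.hasFDerivAt
    have hF2 : HasFDerivAt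
        (fun lam : ℂ => P η * η i * lam + B i η * (lam - (starRingEnd ℂ) lam))
        ((P η * η i) • ContinuousLinearMap.id ℝ ℂ +
          (B i η) • (ContinuousLinearMap.id ℝ ℂ - (Complex.conjCLE : ℂ →L[ℝ] ℂ))) 1 :=
      ((hasFDerivAt_id (1 : ℂ)).const_mul (P η * η i)).add
        (((hasFDerivAt_id (1 : ℂ)).sub hconj).const_mul (B i η))
    have hev : (fun lam : ℂ => P η * η i * lam + B i η * (lam - (starRingEnd ℂ) lam))
        =ᶠ[nhds 1] (fun lam : ℂ => P (lam • η) * η i) := by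
      filter_upwards [isOpen_ne.mem_nhds (one_ne_zero : (1 : ℂ) ≠ 0)] with lam hlam
      rw [star lam hlam]; ring
    have hF2' := hF1.congr_of_eventuallyEq hev
    have hDeq := hF2'.unique hF2
    have happ : ∀ v : ℂ, fderiv ℝ P η (v • η) * η i
        = P η * η i * v + B i η * (v - (starRingEnd ℂ) v) := by
      intro v
      have h := congrArg (fun (D : ℂ →L[ℝ] ℂ) => D v) hDeq
      simp only [ContinuousLinearMap.smulRight_apply, ContinuousLinearMap.comp_apply,
        ContinuousLinearMap.add_apply, ContinuousLinearMap.smul_apply,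
        ContinuousLinearMap.sub_apply, ContinuousLinearMap.id_apply, hLdef,
        smul_eq_mul, ContinuousLinearEquiv.coe_coe, Complex.conjCLE_apply] at h
      linear_combination h
    constructor
    · have h := happ 1
      rw [one_smul, expand η, Finset.sum_add_distrib, ← hSdef, ← hTdef] at h
      simpa using h
    · have h := happ Complex.I
      rw [expand (Complex.I • η)] at h
      have hsum : ∑ k, ((Complex.I • η) k * wdz P η k +
          (starRingEnd ℂ) ((Complex.I • η) k) * wdzbar P η k)
          = Complex.I * S - Complex.I * T := by
        rw [hSdef, hTdef, Finset.mul_sum, Finset.mul_sum, ← Finset.sum_sub_distrib]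
        refine Finset.sum_congr rfl fun k _ => ?_
        simp only [Pi.smul_apply, smul_eq_mul, map_mul, Complex.conj_I]
        ring
      rw [hsum, Complex.conj_I] at h
      linear_combination Complex.I * h +
        (2 * B i η - (S - T) * η i + P η * η i) * Complex.I_sq
  obtain ⟨j, hj⟩ : ∃ j, η j ≠ 0 := Function.ne_iff.mp hη
  have hP3 : S + T = P η := mul_right_cancel₀ hj (main j).1
  refine ⟨fun i => ?_, fun i => ?_, hP3⟩
  · have e2 := hrel η hη i
    have hB2 := (main i).2
    linear_combination e2 + (1 / 2 : ℂ) * hB2 - (η i / 2) * hP3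
  · have hB2 := (main i).2
    linear_combination (1 / 2 : ℂ) * hB2 + (η i / 2) * hP3
end

section
/- Assume θ^{*i} = 0 for all i (the metric L is weakly Kähler in the strong sense θ^{*} = 0), the projective-change equations G̃^i = G^i + (∑_k η^k ∂_k P)η^i hold with B^i = (1/2)(θ̃^{*i} − θ^{*i}) = −(∑_k η̄^k ∂_{k̄}P) η^i, and ∑ η^k ∂_k P + ∑ η̄^k ∂_{k̄} P = P. If additionally θ̃^{*i} g̃_{ir̄} η̄^r = 0 with g̃_{ir̄} η̄^r = ∂_i L̃, ∑_i η^i ∂_i L̃ = L̃, and L̃ > 0, then θ̃^{*i} = 0 for all i, P = ∑_k η^k ∂_k P (so P is (1,0)-homogeneous by Euler), and G̃^i = G^i + P η^i. -/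
open Complex BigOperators

/-- proof of Theorem 3.2: if `L` is weakly Kähler with `θ^{*i} = 0`, the
projective-change equations hold, and `L̃` satisfies the weak-Kähler contraction with
`g̃_{ir̄} η̄^r = ∂_i L̃`, `η^i ∂_i L̃ = L̃ > 0`, then `θ̃^{*i} = 0`, `P = η^k ∂_k P`
(so `P` is `(1,0)`-homogeneous by Euler) and `G̃^i = G^i + P η^i`. -/
theorem weakly_kaehler_projective_change {n : ℕ}
    (Gt G B θ θt : Fin n → (Fin n → ℂ) → ℂ)
    (P : (Fin n → ℂ) → ℂ) (Lt : (Fin n → ℂ) → ℝ)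
    (g : (Fin n → ℂ) → Fin n → Fin n → ℂ)
    (hθ : ∀ (η : Fin n → ℂ), η ≠ 0 → ∀ i, θ i η = 0)
    (hGt : ∀ (η : Fin n → ℂ), η ≠ 0 → ∀ i,
      Gt i η = G i η + (∑ k, η k * wdz P η k) * η i)
    (hBθ : ∀ (η : Fin n → ℂ), η ≠ 0 → ∀ i,
      B i η = (1 / 2) * (θt i η - θ i η))
    (hB : ∀ (η : Fin n → ℂ), η ≠ 0 → ∀ i,
      B i η = -(∑ k, (starRingEnd ℂ) (η k) * wdzbar P η k) * η i)
    (hPsum : ∀ (η : Fin n → ℂ), η ≠ 0 →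
      (∑ k, η k * wdz P η k) + (∑ k, (starRingEnd ℂ) (η k) * wdzbar P η k) = P η)
    (hwk : ∀ (η : Fin n → ℂ), η ≠ 0 →
      ∑ i, θt i η * (∑ r, g η i r * (starRingEnd ℂ) (η r)) = 0)
    (hcontr : ∀ (η : Fin n → ℂ), η ≠ 0 → ∀ i,
      ∑ r, g η i r * (starRingEnd ℂ) (η r) = wdz (fun η' => ((Lt η' : ℝ) : ℂ)) η i)
    (heuler : ∀ (η : Fin n → ℂ), η ≠ 0 →
      ∑ i, η i * wdz (fun η' => ((Lt η' : ℝ) : ℂ)) η i = ((Lt η : ℝ) : ℂ))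
    (hpos : ∀ (η : Fin n → ℂ), η ≠ 0 → 0 < Lt η) :
    ∀ (η : Fin n → ℂ), η ≠ 0 →
      (∀ i, θt i η = 0) ∧
      (P η = ∑ k, η k * wdz P η k) ∧
      (∀ i, Gt i η = G i η + P η * η i) := by
  intro η hη
  set c : ℂ := ∑ k, (starRingEnd ℂ) (η k) * wdzbar P η k with hc
  have hθt : ∀ i, θt i η = -2 * c * η i := by
    intro i
    have h1 := hBθ η hη i
    have h2 := hB η hη i
    rw [hθ η hη i] at h1
    have : (1 / 2 : ℂ) * θt i η = -c * η i := by
      rw [← h2, h1]; ring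
    have := congrArg (fun x => (2 : ℂ) * x) this
    field_simp at this ⊢
    linear_combination this
  have hsum : ∑ i, θt i η * (∑ r, g η i r * (starRingEnd ℂ) (η r)) =
      -2 * c * ((Lt η : ℝ) : ℂ) := by
    rw [← heuler η hη, Finset.mul_sum]
    apply Finset.sum_congr rfl
    intro i _
    rw [hθt i, hcontr η hη i]; ring
  have hL0 : ((Lt η : ℝ) : ℂ) ≠ 0 := by
    simp only [ne_eq, Complex.ofReal_eq_zero]
    exact (hpos η hη).ne'
  have hc0 : c = 0 := by
    have := hwk η hη
    rw [hsum] at this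
    rcases mul_eq_zero.mp this with h | h
    · rcases mul_eq_zero.mp h with h' | h'
      · norm_num at h'
      · exact h'
    · exact absurd h hL0
  refine ⟨fun i => by rw [hθt i, hc0]; ring, ?_, ?_⟩
  · have := hPsum η hη
    rw [← hc, hc0, add_zero] at this
    exact this.symm
  · intro i
    rw [hGt η hη i]
    have := hPsum η hη
    rw [← hc, hc0, add_zero] at this
    rw [this]
end

section
/- Let F̃ = α + |β| be a complex Randers metric. Then (δ_k F̃)η^k = (δ_k|β|)η^k = (1/(2|β|)) (β̄ l_{r̄} (∂b̄^r/∂z^k) + β (∂b_{r̄}/∂z^k) η̄^r) η^k, where δ_k is taken with respect to the Chern–Finsler connection of α, b^i := a^{j̄i} b_{j̄}, and b^{ī} (written b̄^r) is its conjugate. In particular, the generalized Berwald condition (β̄ l_{r̄} ∂b̄^r/∂z^j + β (∂b_{r̄}/∂z^j) η̄^r)η^j = 0 is equivalent to (δ_k|β|)η^k = 0. -/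
open Complex BigOperators

section Randers

variable {n : ℕ}

/-- `α(z,η) = sqrt(a_{ij̄}(z) η^i η̄^j)` as a complex-valued function. -/
noncomputable def alphaF (a : (Fin n → ℂ) → Fin n → Fin n → ℂ) (z η : Fin n → ℂ) : ℂ :=
  ((Real.sqrt ((∑ i, ∑ j, a z i j * η i * (starRingEnd ℂ) (η j)).re) : ℝ) : ℂ)

/-- `β(z,η) = b_i(z) η^i`. -/
noncomputable def betaF (b : (Fin n → ℂ) → Fin n → ℂ) (z η : Fin n → ℂ) : ℂ :=
  ∑ i, b z i * η i

/-- `|β|` as a complex-valued function. -/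
noncomputable def babsF (b : (Fin n → ℂ) → Fin n → ℂ) (z η : Fin n → ℂ) : ℂ :=
  ((‖betaF b z η‖ : ℝ) : ℂ)

/-- The Chern–Finsler nonlinear connection `N^j_k = a^{m̄j}(∂a_{lm̄}/∂z^k)η^l` of `α`. -/
noncomputable def NconnF (a ainv : (Fin n → ℂ) → Fin n → Fin n → ℂ)
    (z η : Fin n → ℂ) (j k : Fin n) : ℂ :=
  ∑ m, ∑ l, ainv z m j * wdz (fun z' => a z' l m) z k * η l

/-- Horizontal derivative `δ_k f = ∂f/∂z^k − N^j_k ∂f/∂η^j` with respect to the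
Chern–Finsler connection of `α`. -/
noncomputable def deltaF (a ainv : (Fin n → ℂ) → Fin n → Fin n → ℂ)
    (f : (Fin n → ℂ) → (Fin n → ℂ) → ℂ) (z η : Fin n → ℂ) (k : Fin n) : ℂ :=
  wdz (fun z' => f z' η) z k - ∑ j, NconnF a ainv z η j k * wdz (f z) η j

/-- `b^r = a^{j̄r} b_{j̄}`. -/
noncomputable def bupF (ainv : (Fin n → ℂ) → Fin n → Fin n → ℂ)
    (b : (Fin n → ℂ) → Fin n → ℂ) (z : Fin n → ℂ) (r : Fin n) : ℂ :=
  ∑ j, ainv z j r * (starRingEnd ℂ) (b z j)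


namespace WTool

variable {n : ℕ} {f g : (Fin n → ℂ) → ℂ} {x : Fin n → ℂ} {k : Fin n}

lemma wdz_add (hf : DifferentiableAt ℝ f x) (hg : DifferentiableAt ℝ g x) (k : Fin n) :
    wdz (fun y => f y + g y) x k = wdz f x k + wdz g x k := by
  simp only [wdz, fderiv_fun_add hf hg, ContinuousLinearMap.add_apply]
  ring

lemma wdz_const (c : ℂ) (x : Fin n → ℂ) (k : Fin n) : wdz (fun _ => c) x k = 0 := by
  simp [wdz, fderiv_const]

lemma wdz_mul (hf : DifferentiableAt ℝ f x) (hg : DifferentiableAt ℝ g x) (k : Fin n) :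
    wdz (fun y => f y * g y) x k = f x * wdz g x k + g x * wdz f x k := by
  simp only [wdz, fderiv_fun_mul hf hg, ContinuousLinearMap.add_apply,
    ContinuousLinearMap.smul_apply, smul_eq_mul]
  ring

lemma wdz_mul_const (hf : DifferentiableAt ℝ f x) (c : ℂ) (k : Fin n) :
    wdz (fun y => f y * c) x k = wdz f x k * c := by
  rw [wdz_mul hf (differentiableAt_const c) k, wdz_const]; ring

lemma wdz_sum {ι : Type*} (s : Finset ι) (F : ι → (Fin n → ℂ) → ℂ)
    (h : ∀ i ∈ s, DifferentiableAt ℝ (F i) x) (k : Fin n) :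
    wdz (fun y => ∑ i ∈ s, F i y) x k = ∑ i ∈ s, wdz (F i) x k := by
  classical
  induction s using Finset.induction with
  | empty => simpa using wdz_const 0 x k
  | @insert i s hi ih =>
    rw [Finset.sum_insert hi]
    have : wdz (fun y => F i y + ∑ j ∈ s, F j y) x k
        = wdz (F i) x k + wdz (fun y => ∑ j ∈ s, F j y) x k := by
      refine wdz_add (h i (Finset.mem_insert_self i s)) ?_ k
      exact DifferentiableAt.fun_sum fun j hj => h j (Finset.mem_insert_of_mem hj)
    simp only [Finset.sum_insert hi] at this ⊢
    rw [this, ih fun j hj => h j (Finset.mem_insert_of_mem hj)]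

lemma diffAt_coord (x : Fin n → ℂ) (i : Fin n) :
    DifferentiableAt ℝ (fun y : Fin n → ℂ => y i) x :=
  (ContinuousLinearMap.proj (R := ℝ) (φ := fun _ : Fin n => ℂ) i).differentiableAt

lemma wdz_coord (x : Fin n → ℂ) (i k : Fin n) :
    wdz (fun y : Fin n → ℂ => y i) x k = if i = k then 1 else 0 := by
  have h : fderiv ℝ (fun y : Fin n → ℂ => y i) x
      = ContinuousLinearMap.proj (R := ℝ) (φ := fun _ : Fin n => ℂ) i :=
    (ContinuousLinearMap.proj (R := ℝ) (φ := fun _ : Fin n => ℂ) i).fderiv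
  simp only [wdz, h, ContinuousLinearMap.proj_apply, Pi.single_apply]
  rcases eq_or_ne i k with h' | h'
  · subst h'
    simp only [if_pos rfl, if_true]
    rw [Complex.I_mul_I]; ring
  · simp [h', eq_comm]

lemma diffAt_conj (hf : DifferentiableAt ℝ f x) :
    DifferentiableAt ℝ (fun y => (starRingEnd ℂ) (f y)) x :=
  Complex.conjCLE.differentiableAt.comp x hf

lemma wdz_conj_coord (x : Fin n → ℂ) (i k : Fin n) :
    wdz (fun y : Fin n → ℂ => (starRingEnd ℂ) (y i)) x k = 0 := by
  have h : fderiv ℝ (fun y : Fin n → ℂ => (starRingEnd ℂ) (y i)) x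
      = (Complex.conjCLE.toContinuousLinearMap).comp
          (ContinuousLinearMap.proj (R := ℝ) (φ := fun _ : Fin n => ℂ) i) :=
    ((Complex.conjCLE.toContinuousLinearMap).comp
        (ContinuousLinearMap.proj (R := ℝ) (φ := fun _ : Fin n => ℂ) i)).fderiv
  simp only [wdz, h, ContinuousLinearMap.comp_apply, ContinuousLinearMap.proj_apply,
    Pi.single_apply]
  rcases eq_or_ne i k with h' | h' <;> simp [h', eq_comm]


lemma hasFDerivAt_ofReal_sqrt {u : (Fin n → ℂ) → ℝ} (hu : DifferentiableAt ℝ u x)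
    (hpos : 0 < u x) :
    HasFDerivAt (fun y => ((Real.sqrt (u y) : ℝ) : ℂ))
      (Complex.ofRealCLM.comp ((1 / (2 * Real.sqrt (u x))) • fderiv ℝ u x)) x :=
  Complex.ofRealCLM.hasFDerivAt.comp x (hu.hasFDerivAt.sqrt (ne_of_gt hpos))

lemma diffAt_ofReal_sqrt {u : (Fin n → ℂ) → ℝ} (hu : DifferentiableAt ℝ u x)
    (hpos : 0 < u x) :
    DifferentiableAt ℝ (fun y => ((Real.sqrt (u y) : ℝ) : ℂ)) x :=
  (hasFDerivAt_ofReal_sqrt hu hpos).differentiableAt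

lemma wdz_sqrt {u : (Fin n → ℂ) → ℝ} (hu : DifferentiableAt ℝ u x)
    (hpos : 0 < u x) (k : Fin n) :
    wdz (fun y => ((Real.sqrt (u y) : ℝ) : ℂ)) x k
      = (1 / (2 * ((Real.sqrt (u x) : ℝ) : ℂ))) * wdz (fun y => ((u y : ℝ) : ℂ)) x k := by
  have h1 := (hasFDerivAt_ofReal_sqrt hu hpos).fderiv
  have h2 : fderiv ℝ (fun y => ((u y : ℝ) : ℂ)) x
      = Complex.ofRealCLM.comp (fderiv ℝ u x) :=
    (Complex.ofRealCLM.hasFDerivAt.comp x hu.hasFDerivAt).fderiv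
  simp only [wdz, h1, h2, ContinuousLinearMap.comp_apply, ContinuousLinearMap.smul_apply,
    smul_eq_mul, Complex.ofRealCLM_apply, Complex.ofReal_mul]
  push_cast
  ring


lemma diffAt_finprod {ι : Type*} {s : Finset ι} {F : ι → (Fin n → ℂ) → ℂ}
    (h : ∀ i ∈ s, DifferentiableAt ℝ (F i) x) :
    DifferentiableAt ℝ (fun y => ∏ i ∈ s, F i y) x := by
  classical
  induction s using Finset.induction with
  | empty => simp only [Finset.prod_empty]; exact differentiableAt_const (1 : ℂ)
  | @insert i s hi ih =>
    simp only [Finset.prod_insert hi]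
    exact (h i (Finset.mem_insert_self i s)).mul
      (ih fun j hj => h j (Finset.mem_insert_of_mem hj))

lemma diffAt_det {M : (Fin n → ℂ) → Matrix (Fin n) (Fin n) ℂ}
    (h : ∀ i j, DifferentiableAt ℝ (fun y => M y i j) x) :
    DifferentiableAt ℝ (fun y => (M y).det) x := by
  classical
  have : (fun y => (M y).det)
      = fun y => ∑ σ : Equiv.Perm (Fin n),
          (((Equiv.Perm.sign σ : ℤ) : ℂ)) * ∏ i, M y (σ i) i := by
    funext y
    simp [Matrix.det_apply, Units.smul_def, zsmul_eq_mul]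
  rw [this]
  exact DifferentiableAt.fun_sum fun σ _ =>
    (diffAt_finprod fun i _ => h (σ i) i).const_mul _

section
variable {a ainv : (Fin n → ℂ) → Fin n → Fin n → ℂ}

lemma matmul_one (hinv : ∀ z r m, ∑ j, ainv z r j * a z j m = if r = m then 1 else 0)
    (z : Fin n → ℂ) : (Matrix.of (ainv z)) * (Matrix.of (a z)) = 1 := by
  ext r m
  rw [Matrix.mul_apply]
  simpa [Matrix.one_apply] using hinv z r m

lemma ainv_eq (hinv : ∀ z r m, ∑ j, ainv z r j * a z j m = if r = m then 1 else 0)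
    (z : Fin n → ℂ) : ainv z = fun r j => (Matrix.of (a z))⁻¹ r j := by
  have := Matrix.inv_eq_left_inv (matmul_one hinv z)
  funext r j
  rw [this]; rfl

lemma det_ne (hinv : ∀ z r m, ∑ j, ainv z r j * a z j m = if r = m then 1 else 0)
    (z : Fin n → ℂ) : (Matrix.of (a z)).det ≠ 0 := by
  intro h0
  have := congrArg Matrix.det (matmul_one hinv z)
  rw [Matrix.det_mul, h0, mul_zero, Matrix.det_one] at this
  exact zero_ne_one this

lemma right_inv (hinv : ∀ z r m, ∑ j, ainv z r j * a z j m = if r = m then 1 else 0)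
    (z : Fin n → ℂ) (r m : Fin n) :
    ∑ j, a z r j * ainv z j m = if r = m then 1 else 0 := by
  have h1 : (Matrix.of (a z)) * (Matrix.of (ainv z)) = 1 :=
    mul_eq_one_comm.mp (matmul_one hinv z)
  have := congrFun (congrFun h1 r) m
  rw [Matrix.mul_apply] at this
  simpa [Matrix.one_apply] using this

lemma diffAt_ainv (hinv : ∀ z r m, ∑ j, ainv z r j * a z j m = if r = m then 1 else 0)
    (ha : ∀ l m, ContDiff ℝ (⊤ : ℕ∞) (fun z => a z l m)) (r j : Fin n) :
    DifferentiableAt ℝ (fun y => ainv y r j) x := by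
  classical
  have hd : ∀ l m, ∀ y : Fin n → ℂ, DifferentiableAt ℝ (fun z => a z l m) y :=
    fun l m y => ((ha l m).differentiable (by simp)).differentiableAt
  have heq : (fun y => ainv y r j)
      = fun y => ((Matrix.of (a y)).det)⁻¹ * (Matrix.of (a y)).adjugate r j := by
    funext y
    rw [ainv_eq hinv y]
    simp only [Matrix.inv_def, Matrix.smul_apply, smul_eq_mul, Ring.inverse_eq_inv]
  rw [heq]
  refine DifferentiableAt.mul (DifferentiableAt.inv ?_ (det_ne hinv x)) ?_
  · exact diffAt_det fun i j' => hd i j' x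
  · have : (fun y => (Matrix.of (a y)).adjugate r j)
        = fun y => ((Matrix.of (a y)).updateRow j (Pi.single r 1)).det := by
      funext y; rw [Matrix.adjugate_apply]
    rw [this]
    refine diffAt_det fun i j' => ?_
    rcases eq_or_ne i j with h | h
    · simp only [h, Matrix.updateRow_apply, if_pos rfl]
      exact differentiableAt_const _
    · simp only [Matrix.updateRow_apply, if_neg h]
      exact hd i j' x

lemma conj_ainv (hinv : ∀ z r m, ∑ j, ainv z r j * a z j m = if r = m then 1 else 0)
    (hherm : ∀ z i j, (starRingEnd ℂ) (a z i j) = a z j i)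
    (z : Fin n → ℂ) (j r : Fin n) :
    (starRingEnd ℂ) (ainv z j r) = ainv z r j := by
  have hA : (Matrix.of (a z)).conjTranspose = Matrix.of (a z) := by
    ext i m
    simp only [Matrix.conjTranspose_apply, Matrix.of_apply]
    exact hherm z m i
  have h2 : ((Matrix.of (a z))⁻¹).conjTranspose = (Matrix.of (a z))⁻¹ := by
    rw [Matrix.conjTranspose_nonsing_inv, hA]
  have h3 := congrFun (congrFun h2 r) j
  rw [Matrix.conjTranspose_apply] at h3
  rw [ainv_eq hinv z]
  simpa using h3

end

section Alpha
variable {n : ℕ} {a ainv : (Fin n → ℂ) → Fin n → Fin n → ℂ} {b : (Fin n → ℂ) → Fin n → ℂ}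

/-- Reality of the hermitian quadratic form. -/
lemma G_real (hherm : ∀ z i j, (starRingEnd ℂ) (a z i j) = a z j i) (y v : Fin n → ℂ) :
    ((((∑ i, ∑ j, a y i j * v i * (starRingEnd ℂ) (v j)).re : ℝ)) : ℂ)
      = ∑ i, ∑ j, a y i j * v i * (starRingEnd ℂ) (v j) := by
  rw [← Complex.conj_eq_iff_re]
  have h1 : (starRingEnd ℂ) (∑ i, ∑ j, a y i j * v i * (starRingEnd ℂ) (v j))
      = ∑ i, ∑ j, a y j i * (starRingEnd ℂ) (v i) * v j := by
    rw [map_sum]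
    refine Finset.sum_congr rfl fun i _ => ?_
    rw [map_sum]
    refine Finset.sum_congr rfl fun j _ => ?_
    simp only [map_mul, hherm, Complex.conj_conj]
  rw [h1, Finset.sum_comm]
  refine Finset.sum_congr rfl fun i _ => Finset.sum_congr rfl fun j _ => ?_
  ring

lemma diffAt_Gz (ha : ∀ l m, ContDiff ℝ (⊤ : ℕ∞) (fun z => a z l m)) (v : Fin n → ℂ)
    (x : Fin n → ℂ) :
    DifferentiableAt ℝ (fun y => ∑ i, ∑ j, a y i j * v i * (starRingEnd ℂ) (v j)) x := by
  refine DifferentiableAt.fun_sum fun i _ => DifferentiableAt.fun_sum fun j _ => ?_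
  exact ((((ha i j).differentiable (by simp)).differentiableAt.mul
    (differentiableAt_const _)).mul (differentiableAt_const _))

lemma diffAt_Geta (z x : Fin n → ℂ) :
    DifferentiableAt ℝ (fun v : Fin n → ℂ =>
      ∑ i, ∑ j, a z i j * v i * (starRingEnd ℂ) (v j)) x := by
  refine DifferentiableAt.fun_sum fun i _ => DifferentiableAt.fun_sum fun j _ => ?_
  exact ((differentiableAt_const _).mul (diffAt_coord x i)).mul (diffAt_conj (diffAt_coord x j))

lemma diffAt_alpha_z (ha : ∀ l m, ContDiff ℝ (⊤ : ℕ∞) (fun z => a z l m))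
    (hherm : ∀ z i j, (starRingEnd ℂ) (a z i j) = a z j i)
    (hpos : ∀ z (v : Fin n → ℂ), v ≠ 0 →
      0 < (∑ i, ∑ j, a z i j * v i * (starRingEnd ℂ) (v j)).re)
    (z η : Fin n → ℂ) (hη : η ≠ 0) :
    DifferentiableAt ℝ (fun y => alphaF a y η) z := by
  have : DifferentiableAt ℝ
      (fun y => (∑ i, ∑ j, a y i j * η i * (starRingEnd ℂ) (η j)).re) z :=
    Complex.reCLM.differentiableAt.comp z (diffAt_Gz ha η z)
  exact diffAt_ofReal_sqrt this (hpos z η hη)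

lemma diffAt_alpha_eta (ha : ∀ l m, ContDiff ℝ (⊤ : ℕ∞) (fun z => a z l m))
    (hpos : ∀ z (v : Fin n → ℂ), v ≠ 0 →
      0 < (∑ i, ∑ j, a z i j * v i * (starRingEnd ℂ) (v j)).re)
    (z η : Fin n → ℂ) (hη : η ≠ 0) :
    DifferentiableAt ℝ (fun v => alphaF a z v) η := by
  have : DifferentiableAt ℝ
      (fun v : Fin n → ℂ => (∑ i, ∑ j, a z i j * v i * (starRingEnd ℂ) (v j)).re) η :=
    Complex.reCLM.differentiableAt.comp η (diffAt_Geta z η)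
  exact diffAt_ofReal_sqrt this (hpos z η hη)

lemma wdz_alpha_z (ha : ∀ l m, ContDiff ℝ (⊤ : ℕ∞) (fun z => a z l m))
    (hherm : ∀ z i j, (starRingEnd ℂ) (a z i j) = a z j i)
    (hpos : ∀ z (v : Fin n → ℂ), v ≠ 0 →
      0 < (∑ i, ∑ j, a z i j * v i * (starRingEnd ℂ) (v j)).re)
    (z η : Fin n → ℂ) (hη : η ≠ 0) (k : Fin n) :
    wdz (fun y => alphaF a y η) z k
      = (1 / (2 * alphaF a z η)) *
          ∑ i, ∑ j, wdz (fun y => a y i j) z k * η i * (starRingEnd ℂ) (η j) := by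
  have hu : DifferentiableAt ℝ
      (fun y => (∑ i, ∑ j, a y i j * η i * (starRingEnd ℂ) (η j)).re) z :=
    Complex.reCLM.differentiableAt.comp z (diffAt_Gz ha η z)
  have h := wdz_sqrt hu (hpos z η hη) k
  have hfun : (fun y => (((∑ i, ∑ j, a y i j * η i * (starRingEnd ℂ) (η j)).re : ℝ) : ℂ))
      = fun y => ∑ i, ∑ j, a y i j * η i * (starRingEnd ℂ) (η j) :=
    funext fun y => G_real hherm y η
  rw [hfun] at h
  have hsum : wdz (fun y => ∑ i, ∑ j, a y i j * η i * (starRingEnd ℂ) (η j)) z k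
      = ∑ i, ∑ j, wdz (fun y => a y i j) z k * η i * (starRingEnd ℂ) (η j) := by
    rw [wdz_sum Finset.univ _ (fun i _ => DifferentiableAt.fun_sum fun j _ =>
      (((((ha i j).differentiable (by simp)).differentiableAt).fun_mul
        (differentiableAt_const _)).fun_mul (differentiableAt_const _)))]
    refine Finset.sum_congr rfl fun i _ => ?_
    rw [wdz_sum Finset.univ _ (fun j _ =>
      (((((ha i j).differentiable (by simp)).differentiableAt).fun_mul
        (differentiableAt_const _)).fun_mul (differentiableAt_const _)))]
    refine Finset.sum_congr rfl fun j _ => ?_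
    have e : (fun y => a y i j * η i * (starRingEnd ℂ) (η j))
        = fun y => a y i j * (η i * (starRingEnd ℂ) (η j)) := by
      funext y; ring
    rw [e, wdz_mul_const ((ha i j).differentiable (by simp)).differentiableAt, mul_assoc]
  rw [hsum] at h
  exact h

lemma wdz_alpha_eta (ha : ∀ l m, ContDiff ℝ (⊤ : ℕ∞) (fun z => a z l m))
    (hherm : ∀ z i j, (starRingEnd ℂ) (a z i j) = a z j i)
    (hpos : ∀ z (v : Fin n → ℂ), v ≠ 0 →
      0 < (∑ i, ∑ j, a z i j * v i * (starRingEnd ℂ) (v j)).re)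
    (z η : Fin n → ℂ) (hη : η ≠ 0) (j : Fin n) :
    wdz (fun v => alphaF a z v) η j
      = (1 / (2 * alphaF a z η)) * ∑ m, a z j m * (starRingEnd ℂ) (η m) := by
  have hu : DifferentiableAt ℝ
      (fun v : Fin n → ℂ => (∑ i, ∑ m, a z i m * v i * (starRingEnd ℂ) (v m)).re) η :=
    Complex.reCLM.differentiableAt.comp η (diffAt_Geta z η)
  have h := wdz_sqrt hu (hpos z η hη) j
  have hfun : (fun v : Fin n → ℂ =>
        (((∑ i, ∑ m, a z i m * v i * (starRingEnd ℂ) (v m)).re : ℝ) : ℂ))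
      = fun v => ∑ i, ∑ m, a z i m * v i * (starRingEnd ℂ) (v m) :=
    funext fun v => G_real hherm z v
  rw [hfun] at h
  have hsum : wdz (fun v : Fin n → ℂ =>
        ∑ i, ∑ m, a z i m * v i * (starRingEnd ℂ) (v m)) η j
      = ∑ m, a z j m * (starRingEnd ℂ) (η m) := by
    rw [wdz_sum Finset.univ _ (fun i _ => DifferentiableAt.fun_sum fun m _ =>
      ((differentiableAt_const _).fun_mul (diffAt_coord η i)).fun_mul
        (diffAt_conj (diffAt_coord η m)))]
    have key : ∀ i : Fin n, wdz (fun v : Fin n → ℂ =>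
        ∑ m, a z i m * v i * (starRingEnd ℂ) (v m)) η j
        = if i = j then ∑ m, a z j m * (starRingEnd ℂ) (η m) else 0 := by
      intro i
      rw [wdz_sum Finset.univ _ (fun m _ =>
        ((differentiableAt_const _).fun_mul (diffAt_coord η i)).fun_mul
          (diffAt_conj (diffAt_coord η m)))]
      have term : ∀ m : Fin n, wdz (fun v : Fin n → ℂ =>
          a z i m * v i * (starRingEnd ℂ) (v m)) η j
          = if i = j then a z j m * (starRingEnd ℂ) (η m) else 0 := by
        intro m
        have e : (fun v : Fin n → ℂ => a z i m * v i * (starRingEnd ℂ) (v m))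
            = fun v => a z i m * (v i * (starRingEnd ℂ) (v m)) := by
          funext v; ring
        rw [e]
        have hmul : wdz (fun v : Fin n → ℂ => v i * (starRingEnd ℂ) (v m)) η j
            = (if i = j then 1 else 0) * (starRingEnd ℂ) (η m) := by
          rw [wdz_mul (diffAt_coord η i) (diffAt_conj (diffAt_coord η m)) j,
            wdz_conj_coord, wdz_coord]
          ring
        have hc : wdz (fun v : Fin n → ℂ => a z i m * (v i * (starRingEnd ℂ) (v m)))
            η j = a z i m * ((if i = j then 1 else 0) * (starRingEnd ℂ) (η m)) := by
          have := wdz_mul (x := η) (f := fun _ => a z i m)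
            (g := fun v : Fin n → ℂ => v i * (starRingEnd ℂ) (v m))
            (differentiableAt_const _)
            ((diffAt_coord η i).mul (diffAt_conj (diffAt_coord η m))) j
          rw [this, hmul, wdz_const]; ring
        rw [hc]
        rcases eq_or_ne i j with h' | h'
        · subst h'; simp
        · simp [h']
      rw [Finset.sum_congr rfl fun m _ => term m]
      rcases eq_or_ne i j with h' | h'
      · subst h'; simp
      · simp [h']
    rw [Finset.sum_congr rfl fun i _ => key i]
    simp
  rw [hsum] at h
  exact h

end Alpha

section AlphaDelta
variable {n : ℕ} {a ainv : (Fin n → ℂ) → Fin n → Fin n → ℂ}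

lemma sum_Ninv (hinv : ∀ z r m, ∑ j, ainv z r j * a z j m = if r = m then 1 else 0)
    (z η : Fin n → ℂ) (m : Fin n) :
    ∑ j, ainv z m j * (∑ s, a z j s * (starRingEnd ℂ) (η s)) = (starRingEnd ℂ) (η m) := by
  have h1 : ∀ j : Fin n, ainv z m j * (∑ s, a z j s * (starRingEnd ℂ) (η s))
      = ∑ s, ainv z m j * a z j s * (starRingEnd ℂ) (η s) := by
    intro j; rw [Finset.mul_sum]
    exact Finset.sum_congr rfl fun s _ => by ring
  rw [Finset.sum_congr rfl fun j _ => h1 j, Finset.sum_comm]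
  have h2 : ∀ s : Fin n, ∑ j, ainv z m j * a z j s * (starRingEnd ℂ) (η s)
      = (if m = s then 1 else 0) * (starRingEnd ℂ) (η s) := by
    intro s
    rw [← Finset.sum_mul, hinv z m s]
  rw [Finset.sum_congr rfl fun s _ => h2 s]
  simp

lemma NL_contract (hinv : ∀ z r m, ∑ j, ainv z r j * a z j m = if r = m then 1 else 0)
    (z η : Fin n → ℂ) (k : Fin n) :
    ∑ j, NconnF a ainv z η j k * (∑ m, a z j m * (starRingEnd ℂ) (η m))
      = ∑ i, ∑ j, wdz (fun y => a y i j) z k * η i * (starRingEnd ℂ) (η j) := by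
  calc ∑ j, NconnF a ainv z η j k * (∑ m, a z j m * (starRingEnd ℂ) (η m))
      = ∑ j, ∑ m, ∑ l, ainv z m j * wdz (fun y => a y l m) z k * η l
          * (∑ s, a z j s * (starRingEnd ℂ) (η s)) := by
        refine Finset.sum_congr rfl fun j _ => ?_
        simp only [NconnF, Finset.sum_mul]
    _ = ∑ m, ∑ l, ∑ j, ainv z m j * wdz (fun y => a y l m) z k * η l
          * (∑ s, a z j s * (starRingEnd ℂ) (η s)) := by
        rw [Finset.sum_comm]
        exact Finset.sum_congr rfl fun m _ => Finset.sum_comm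
    _ = ∑ m, ∑ l, wdz (fun y => a y l m) z k * η l
          * (∑ j, ainv z m j * (∑ s, a z j s * (starRingEnd ℂ) (η s))) := by
        refine Finset.sum_congr rfl fun m _ => Finset.sum_congr rfl fun l _ => ?_
        rw [Finset.mul_sum]
        exact Finset.sum_congr rfl fun j _ => by ring
    _ = ∑ m, ∑ l, wdz (fun y => a y l m) z k * η l * (starRingEnd ℂ) (η m) := by
        refine Finset.sum_congr rfl fun m _ => Finset.sum_congr rfl fun l _ => ?_
        rw [sum_Ninv hinv z η m]
    _ = ∑ i, ∑ j, wdz (fun y => a y i j) z k * η i * (starRingEnd ℂ) (η j) :=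
        Finset.sum_comm

lemma delta_alpha_zero (ha : ∀ l m, ContDiff ℝ (⊤ : ℕ∞) (fun z => a z l m))
    (hherm : ∀ z i j, (starRingEnd ℂ) (a z i j) = a z j i)
    (hpos : ∀ z (v : Fin n → ℂ), v ≠ 0 →
      0 < (∑ i, ∑ j, a z i j * v i * (starRingEnd ℂ) (v j)).re)
    (hinv : ∀ z r m, ∑ j, ainv z r j * a z j m = if r = m then 1 else 0)
    (z η : Fin n → ℂ) (hη : η ≠ 0) (k : Fin n) :
    deltaF a ainv (fun z' η' => alphaF a z' η') z η k = 0 := by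
  unfold deltaF
  rw [wdz_alpha_z ha hherm hpos z η hη k]
  have h1 : ∀ j : Fin n, NconnF a ainv z η j k
        * wdz (fun v => alphaF a z v) η j
      = (1 / (2 * alphaF a z η)) * (NconnF a ainv z η j k
          * (∑ m, a z j m * (starRingEnd ℂ) (η m))) := by
    intro j
    rw [wdz_alpha_eta ha hherm hpos z η hη j]
    ring
  rw [Finset.sum_congr rfl fun j _ => h1 j, ← Finset.mul_sum, NL_contract hinv z η k,
    sub_self]

end AlphaDelta

section Beta
variable {n : ℕ} {a ainv : (Fin n → ℂ) → Fin n → Fin n → ℂ} {b : (Fin n → ℂ) → Fin n → ℂ}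

lemma wdz_of_const_fun {f : (Fin n → ℂ) → ℂ} {x : Fin n → ℂ} (c : ℂ)
    (h : ∀ y, f y = c) (k : Fin n) : wdz f x k = 0 := by
  have : f = fun _ => c := funext h
  rw [this, wdz_const]

lemma beta_conj_eq (y v : Fin n → ℂ) :
    (starRingEnd ℂ) (betaF b y v)
      = ∑ i, (starRingEnd ℂ) (b y i) * (starRingEnd ℂ) (v i) := by
  unfold betaF
  rw [map_sum]
  exact Finset.sum_congr rfl fun i _ => by rw [map_mul]

lemma babs_eq (y v : Fin n → ℂ) :
    babsF b y v
      = (((Real.sqrt ((betaF b y v * (starRingEnd ℂ) (betaF b y v)).re) : ℝ)) : ℂ) := by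
  unfold babsF
  rw [Complex.norm_def]
  congr 2
  rw [Complex.mul_conj]
  simp

lemma P_real (y v : Fin n → ℂ) :
    (((betaF b y v * (starRingEnd ℂ) (betaF b y v)).re : ℝ) : ℂ)
      = betaF b y v * (starRingEnd ℂ) (betaF b y v) := by
  rw [Complex.mul_conj]
  simp

lemma P_pos {y v : Fin n → ℂ} (hb : betaF b y v ≠ 0) :
    0 < (betaF b y v * (starRingEnd ℂ) (betaF b y v)).re := by
  rw [Complex.mul_conj]
  simpa using Complex.normSq_pos.mpr hb

lemma diffAt_beta_z (hb : ∀ i, ContDiff ℝ (⊤ : ℕ∞) (fun z => b z i)) (η x : Fin n → ℂ) :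
    DifferentiableAt ℝ (fun y => betaF b y η) x := by
  refine DifferentiableAt.fun_sum fun i _ => ?_
  exact (((hb i).differentiable (by simp)).differentiableAt).mul (differentiableAt_const _)

lemma diffAt_beta_eta (z x : Fin n → ℂ) :
    DifferentiableAt ℝ (fun v : Fin n → ℂ => betaF b z v) x := by
  refine DifferentiableAt.fun_sum fun i _ => ?_
  exact (differentiableAt_const _).mul (diffAt_coord x i)

lemma diffAt_P_z (hb : ∀ i, ContDiff ℝ (⊤ : ℕ∞) (fun z => b z i)) (η x : Fin n → ℂ) :
    DifferentiableAt ℝ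
      (fun y => (betaF b y η * (starRingEnd ℂ) (betaF b y η)).re) x :=
  Complex.reCLM.differentiableAt.comp x
    ((diffAt_beta_z hb η x).mul (diffAt_conj (diffAt_beta_z hb η x)))

lemma diffAt_P_eta (z x : Fin n → ℂ) :
    DifferentiableAt ℝ
      (fun v : Fin n → ℂ => (betaF b z v * (starRingEnd ℂ) (betaF b z v)).re) x :=
  Complex.reCLM.differentiableAt.comp x
    ((diffAt_beta_eta z x).mul (diffAt_conj (diffAt_beta_eta z x)))

lemma diffAt_babs_z (hb : ∀ i, ContDiff ℝ (⊤ : ℕ∞) (fun z => b z i)) {z η : Fin n → ℂ}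
    (hβ : betaF b z η ≠ 0) :
    DifferentiableAt ℝ (fun y => babsF b y η) z := by
  have : (fun y => babsF b y η)
      = fun y => (((Real.sqrt ((betaF b y η * (starRingEnd ℂ) (betaF b y η)).re) : ℝ)) : ℂ) :=
    funext fun y => babs_eq y η
  rw [this]
  exact diffAt_ofReal_sqrt (diffAt_P_z hb η z) (P_pos hβ)

lemma diffAt_babs_eta {z η : Fin n → ℂ} (hβ : betaF b z η ≠ 0) :
    DifferentiableAt ℝ (fun v => babsF b z v) η := by
  have : (fun v : Fin n → ℂ => babsF b z v)
      = fun v => (((Real.sqrt ((betaF b z v * (starRingEnd ℂ) (betaF b z v)).re) : ℝ)) : ℂ) :=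
    funext fun v => babs_eq z v
  rw [this]
  exact diffAt_ofReal_sqrt (diffAt_P_eta z η) (P_pos hβ)

lemma wdz_beta_z (hb : ∀ i, ContDiff ℝ (⊤ : ℕ∞) (fun z => b z i)) (z η : Fin n → ℂ) (k : Fin n) :
    wdz (fun y => betaF b y η) z k = ∑ i, wdz (fun y => b y i) z k * η i := by
  unfold betaF
  rw [wdz_sum Finset.univ _ (fun i _ =>
    (((hb i).differentiable (by simp)).differentiableAt).fun_mul (differentiableAt_const _))]
  exact Finset.sum_congr rfl fun i _ =>
    wdz_mul_const ((hb i).differentiable (by simp)).differentiableAt _ k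

lemma wdz_conjbeta_z (hb : ∀ i, ContDiff ℝ (⊤ : ℕ∞) (fun z => b z i)) (z η : Fin n → ℂ) (k : Fin n) :
    wdz (fun y => (starRingEnd ℂ) (betaF b y η)) z k
      = ∑ i, wdz (fun y => (starRingEnd ℂ) (b y i)) z k * (starRingEnd ℂ) (η i) := by
  have h : (fun y => (starRingEnd ℂ) (betaF b y η))
      = fun y => ∑ i, (starRingEnd ℂ) (b y i) * (starRingEnd ℂ) (η i) :=
    funext fun y => beta_conj_eq y η
  rw [h]
  rw [wdz_sum Finset.univ _ (fun i _ =>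
    (diffAt_conj ((hb i).differentiable (by simp)).differentiableAt).fun_mul
      (differentiableAt_const _))]
  exact Finset.sum_congr rfl fun i _ =>
    wdz_mul_const (diffAt_conj ((hb i).differentiable (by simp)).differentiableAt) _ k

lemma wdz_beta_eta (z η : Fin n → ℂ) (j : Fin n) :
    wdz (fun v : Fin n → ℂ => betaF b z v) η j = b z j := by
  unfold betaF
  rw [wdz_sum Finset.univ _ (fun i _ =>
    (differentiableAt_const _).fun_mul (diffAt_coord η i))]
  have h : ∀ i : Fin n, wdz (fun v : Fin n → ℂ => b z i * v i) η j
      = b z i * (if i = j then 1 else 0) := by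
    intro i
    rw [wdz_mul (differentiableAt_const _) (diffAt_coord η i) j, wdz_const, wdz_coord]
    ring
  rw [Finset.sum_congr rfl fun i _ => h i]
  simp

lemma wdz_conjbeta_eta (z η : Fin n → ℂ) (j : Fin n) :
    wdz (fun v : Fin n → ℂ => (starRingEnd ℂ) (betaF b z v)) η j = 0 := by
  have h : (fun v : Fin n → ℂ => (starRingEnd ℂ) (betaF b z v))
      = fun v => ∑ i, (starRingEnd ℂ) (b z i) * (starRingEnd ℂ) (v i) :=
    funext fun v => beta_conj_eq z v
  rw [h]
  rw [wdz_sum Finset.univ _ (fun i _ =>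
    (differentiableAt_const _).fun_mul (diffAt_conj (diffAt_coord η i)))]
  have h2 : ∀ i : Fin n, wdz (fun v : Fin n → ℂ =>
      (starRingEnd ℂ) (b z i) * (starRingEnd ℂ) (v i)) η j = 0 := by
    intro i
    rw [wdz_mul (differentiableAt_const _) (diffAt_conj (diffAt_coord η i)) j,
      wdz_const, wdz_conj_coord]
    ring
  rw [Finset.sum_congr rfl fun i _ => h2 i]
  simp

lemma wdz_babs_z (hb : ∀ i, ContDiff ℝ (⊤ : ℕ∞) (fun z => b z i)) {z η : Fin n → ℂ}
    (hβ : betaF b z η ≠ 0) (k : Fin n) :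
    wdz (fun y => babsF b y η) z k
      = (1 / (2 * babsF b z η)) *
          ((starRingEnd ℂ) (betaF b z η) * ∑ i, wdz (fun y => b y i) z k * η i
            + betaF b z η *
              ∑ i, wdz (fun y => (starRingEnd ℂ) (b y i)) z k * (starRingEnd ℂ) (η i)) := by
  have hrw : (fun y => babsF b y η)
      = fun y => (((Real.sqrt ((betaF b y η * (starRingEnd ℂ) (betaF b y η)).re) : ℝ)) : ℂ) :=
    funext fun y => babs_eq y η
  rw [hrw]
  rw [wdz_sqrt (diffAt_P_z hb η z) (P_pos hβ) k]
  have hfun : (fun y => (((betaF b y η * (starRingEnd ℂ) (betaF b y η)).re : ℝ) : ℂ))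
      = fun y => betaF b y η * (starRingEnd ℂ) (betaF b y η) :=
    funext fun y => P_real y η
  rw [hfun]
  rw [wdz_mul (diffAt_beta_z hb η z) (diffAt_conj (diffAt_beta_z hb η z)) k,
    wdz_beta_z hb z η k, wdz_conjbeta_z hb z η k]
  rw [babs_eq z η]
  ring

lemma wdz_babs_eta (hb : ∀ i, ContDiff ℝ (⊤ : ℕ∞) (fun z => b z i)) {z η : Fin n → ℂ}
    (hβ : betaF b z η ≠ 0) (j : Fin n) :
    wdz (fun v => babsF b z v) η j
      = (1 / (2 * babsF b z η)) * ((starRingEnd ℂ) (betaF b z η) * b z j) := by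
  have hrw : (fun v : Fin n → ℂ => babsF b z v)
      = fun v => (((Real.sqrt ((betaF b z v * (starRingEnd ℂ) (betaF b z v)).re) : ℝ)) : ℂ) :=
    funext fun v => babs_eq z v
  rw [hrw]
  rw [wdz_sqrt (diffAt_P_eta z η) (P_pos hβ) j]
  have hfun : (fun v : Fin n → ℂ =>
        (((betaF b z v * (starRingEnd ℂ) (betaF b z v)).re : ℝ) : ℂ))
      = fun v => betaF b z v * (starRingEnd ℂ) (betaF b z v) :=
    funext fun v => P_real z v
  rw [hfun]
  rw [wdz_mul (diffAt_beta_eta z η) (diffAt_conj (diffAt_beta_eta z η)) j,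
    wdz_beta_eta z η j, wdz_conjbeta_eta z η j]
  rw [babs_eq z η]
  ring

end Beta

section Bup
variable {n : ℕ} {a ainv : (Fin n → ℂ) → Fin n → Fin n → ℂ} {b : (Fin n → ℂ) → Fin n → ℂ}

lemma conj_bup_eq (hinv : ∀ z r m, ∑ j, ainv z r j * a z j m = if r = m then 1 else 0)
    (hherm : ∀ z i j, (starRingEnd ℂ) (a z i j) = a z j i) (r : Fin n) :
    (fun y => (starRingEnd ℂ) (bupF ainv b y r)) = fun y => ∑ j, ainv y r j * b y j := by
  funext y
  unfold bupF
  rw [map_sum]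
  refine Finset.sum_congr rfl fun j _ => ?_
  rw [map_mul, Complex.conj_conj, conj_ainv hinv hherm y j r]

lemma deriv_right_inv (hinv : ∀ z r m, ∑ j, ainv z r j * a z j m = if r = m then 1 else 0)
    (ha : ∀ l m, ContDiff ℝ (⊤ : ℕ∞) (fun z => a z l m)) (z : Fin n → ℂ) (s j k : Fin n) :
    ∑ r, a z s r * wdz (fun y => ainv y r j) z k
      = -∑ r, wdz (fun y => a y s r) z k * ainv z r j := by
  have hda : ∀ l m, DifferentiableAt ℝ (fun y => a y l m) z :=
    fun l m => ((ha l m).differentiable (by simp)).differentiableAt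
  have hdi : ∀ r j : Fin n, DifferentiableAt ℝ (fun y => ainv y r j) z :=
    fun r j => diffAt_ainv hinv ha r j
  have h0 : wdz (fun y => ∑ r, a y s r * ainv y r j) z k = 0 :=
    wdz_of_const_fun (if s = j then 1 else 0) (fun y => right_inv hinv y s j) k
  rw [wdz_sum Finset.univ _ (fun r _ => (hda s r).fun_mul (hdi r j)) k] at h0
  have h1 : ∀ r : Fin n, wdz (fun y => a y s r * ainv y r j) z k
      = a z s r * wdz (fun y => ainv y r j) z k
        + wdz (fun y => a y s r) z k * ainv z r j := by
    intro r
    rw [wdz_mul (hda s r) (hdi r j) k]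
    ring
  rw [Finset.sum_congr rfl fun r _ => h1 r, Finset.sum_add_distrib] at h0
  linear_combination h0

lemma wdz_conj_bup (hinv : ∀ z r m, ∑ j, ainv z r j * a z j m = if r = m then 1 else 0)
    (hherm : ∀ z i j, (starRingEnd ℂ) (a z i j) = a z j i)
    (ha : ∀ l m, ContDiff ℝ (⊤ : ℕ∞) (fun z => a z l m))
    (hb : ∀ i, ContDiff ℝ (⊤ : ℕ∞) (fun z => b z i)) (z : Fin n → ℂ) (r k : Fin n) :
    wdz (fun y => (starRingEnd ℂ) (bupF ainv b y r)) z k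
      = ∑ j, (wdz (fun y => ainv y r j) z k * b z j
          + ainv z r j * wdz (fun y => b y j) z k) := by
  rw [conj_bup_eq hinv hherm r]
  have hdi : ∀ j : Fin n, DifferentiableAt ℝ (fun y => ainv y r j) z :=
    fun j => diffAt_ainv hinv ha r j
  have hdb : ∀ j : Fin n, DifferentiableAt ℝ (fun y => b y j) z :=
    fun j => ((hb j).differentiable (by simp)).differentiableAt
  rw [wdz_sum Finset.univ _ (fun j _ => (hdi j).fun_mul (hdb j)) k]
  refine Finset.sum_congr rfl fun j _ => ?_
  rw [wdz_mul (hdi j) (hdb j) k]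
  ring

lemma bup_contract (hinv : ∀ z r m, ∑ j, ainv z r j * a z j m = if r = m then 1 else 0)
    (hherm : ∀ z i j, (starRingEnd ℂ) (a z i j) = a z j i)
    (ha : ∀ l m, ContDiff ℝ (⊤ : ℕ∞) (fun z => a z l m))
    (hb : ∀ i, ContDiff ℝ (⊤ : ℕ∞) (fun z => b z i)) (z η : Fin n → ℂ) (k : Fin n) :
    ∑ r, (∑ j, a z j r * η j) * wdz (fun y => (starRingEnd ℂ) (bupF ainv b y r)) z k
      = ∑ i, wdz (fun y => b y i) z k * η i
        - ∑ j, NconnF a ainv z η j k * b z j := by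
  classical
  set W : Fin n → ℂ := fun j => wdz (fun y => b y j) z k with hW
  set D : Fin n → Fin n → ℂ := fun r j => wdz (fun y => ainv y r j) z k with hD
  set X : Fin n → Fin n → ℂ := fun s r => wdz (fun y => a y s r) z k with hX
  have hsplit : ∑ r, (∑ j, a z j r * η j) * wdz (fun y => (starRingEnd ℂ) (bupF ainv b y r)) z k
      = (∑ r, (∑ s, a z s r * η s) * (∑ j, D r j * b z j))
        + ∑ r, (∑ s, a z s r * η s) * (∑ j, ainv z r j * W j) := by
    rw [← Finset.sum_add_distrib]
    refine Finset.sum_congr rfl fun r _ => ?_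
    rw [wdz_conj_bup hinv hherm ha hb z r k, Finset.sum_add_distrib, mul_add]
  rw [hsplit]
  have hS2 : ∑ r, (∑ s, a z s r * η s) * (∑ j, ainv z r j * W j)
      = ∑ i, W i * η i := by
    calc ∑ r, (∑ s, a z s r * η s) * (∑ j, ainv z r j * W j)
        = ∑ r, ∑ s, ∑ j, a z s r * η s * (ainv z r j * W j) := by
          refine Finset.sum_congr rfl fun r _ => ?_
          rw [Finset.sum_mul]
          exact Finset.sum_congr rfl fun s _ => by rw [Finset.mul_sum]
      _ = ∑ s, ∑ j, ∑ r, a z s r * η s * (ainv z r j * W j) := by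
          rw [Finset.sum_comm]
          exact Finset.sum_congr rfl fun s _ => Finset.sum_comm
      _ = ∑ s, ∑ j, (∑ r, a z s r * ainv z r j) * (η s * W j) := by
          refine Finset.sum_congr rfl fun s _ => Finset.sum_congr rfl fun j _ => ?_
          rw [Finset.sum_mul]
          exact Finset.sum_congr rfl fun r _ => by ring
      _ = ∑ s, ∑ j, (if s = j then 1 else 0) * (η s * W j) := by
          refine Finset.sum_congr rfl fun s _ => Finset.sum_congr rfl fun j _ => ?_
          rw [right_inv hinv z s j]
      _ = ∑ i, W i * η i := by
          refine Finset.sum_congr rfl fun s _ => ?_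
          · simp [mul_comm]
  have hS1 : ∑ r, (∑ s, a z s r * η s) * (∑ j, D r j * b z j)
      = -∑ j, NconnF a ainv z η j k * b z j := by
    have step : ∑ r, (∑ s, a z s r * η s) * (∑ j, D r j * b z j)
        = -∑ s, ∑ j, ∑ r, X s r * ainv z r j * (η s * b z j) := by
      calc ∑ r, (∑ s, a z s r * η s) * (∑ j, D r j * b z j)
          = ∑ r, ∑ s, ∑ j, a z s r * η s * (D r j * b z j) := by
            refine Finset.sum_congr rfl fun r _ => ?_
            rw [Finset.sum_mul]
            exact Finset.sum_congr rfl fun s _ => by rw [Finset.mul_sum]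
        _ = ∑ s, ∑ j, ∑ r, a z s r * η s * (D r j * b z j) := by
            rw [Finset.sum_comm]
            exact Finset.sum_congr rfl fun s _ => Finset.sum_comm
        _ = ∑ s, ∑ j, (∑ r, a z s r * D r j) * (η s * b z j) := by
            refine Finset.sum_congr rfl fun s _ => Finset.sum_congr rfl fun j _ => ?_
            rw [Finset.sum_mul]
            exact Finset.sum_congr rfl fun r _ => by ring
        _ = ∑ s, ∑ j, (-∑ r, X s r * ainv z r j) * (η s * b z j) := by
            refine Finset.sum_congr rfl fun s _ => Finset.sum_congr rfl fun j _ => ?_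
            rw [deriv_right_inv hinv ha z s j k]
        _ = -∑ s, ∑ j, ∑ r, X s r * ainv z r j * (η s * b z j) := by
            rw [← Finset.sum_neg_distrib]
            refine Finset.sum_congr rfl fun s _ => ?_
            rw [← Finset.sum_neg_distrib]
            refine Finset.sum_congr rfl fun j _ => ?_
            rw [neg_mul, Finset.sum_mul]
    have stepN : ∑ j, NconnF a ainv z η j k * b z j
        = ∑ s, ∑ j, ∑ r, X s r * ainv z r j * (η s * b z j) := by
      calc ∑ j, NconnF a ainv z η j k * b z j
          = ∑ j, ∑ r, ∑ s, ainv z r j * X s r * η s * b z j := by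
            refine Finset.sum_congr rfl fun j _ => ?_
            simp only [NconnF, Finset.sum_mul, hX]
        _ = ∑ s, ∑ j, ∑ r, X s r * ainv z r j * (η s * b z j) := by
            have h1 : ∑ j, ∑ r, ∑ s, (ainv z r j * X s r * η s * b z j)
                = ∑ j, ∑ s, ∑ r, (ainv z r j * X s r * η s * b z j) :=
              Finset.sum_congr rfl fun j _ => Finset.sum_comm
            rw [h1, Finset.sum_comm]
            exact Finset.sum_congr rfl fun s _ => Finset.sum_congr rfl fun j _ =>
              Finset.sum_congr rfl fun r _ => by ring
    rw [step, stepN]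
  rw [hS1, hS2]
  ring

end Bup

end WTool

/-- equation (4.2) and Lemma 4.1: for the Randers metric `F̃ = α + |β|`,
`(δ_k F̃)η^k = (δ_k|β|)η^k = (1/(2|β|))(β̄ l_{r̄} ∂b̄^r/∂z^k + β (∂b_{r̄}/∂z^k) η̄^r) η^k`,
and the generalized Berwald condition
`(β̄ l_{r̄} ∂b̄^r/∂z^j + β (∂b_{r̄}/∂z^j) η̄^r)η^j = 0` holds iff `(δ_k|β|)η^k = 0`. -/
theorem randers_delta_contraction
    (a ainv : (Fin n → ℂ) → Fin n → Fin n → ℂ) (b : (Fin n → ℂ) → Fin n → ℂ)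
    (hasmooth : ∀ l m, ContDiff ℝ (⊤ : ℕ∞) (fun z => a z l m))
    (hbsmooth : ∀ i, ContDiff ℝ (⊤ : ℕ∞) (fun z => b z i))
    (hherm : ∀ z i j, (starRingEnd ℂ) (a z i j) = a z j i)
    (hpos : ∀ z (v : Fin n → ℂ), v ≠ 0 →
      0 < (∑ i, ∑ j, a z i j * v i * (starRingEnd ℂ) (v j)).re)
    (hinv : ∀ z r m, ∑ j, ainv z r j * a z j m = if r = m then 1 else 0) :
    ∀ (z η : Fin n → ℂ), η ≠ 0 → betaF b z η ≠ 0 →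
      (∑ k, deltaF a ainv (fun z' η' => alphaF a z' η' + babsF b z' η') z η k * η k
        = ∑ k, deltaF a ainv (babsF b) z η k * η k) ∧
      (∑ k, deltaF a ainv (babsF b) z η k * η k
        = (1 / (2 * babsF b z η)) *
            ∑ k, ((starRingEnd ℂ) (betaF b z η) *
                    (∑ r, (∑ j, a z j r * η j) *
                      wdz (fun z' => (starRingEnd ℂ) (bupF ainv b z' r)) z k)
                  + betaF b z η *
                    ∑ r, wdz (fun z' => (starRingEnd ℂ) (b z' r)) z k * (starRingEnd ℂ) (η r))
              * η k) ∧
      ((∑ k, ((starRingEnd ℂ) (betaF b z η) *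
                (∑ r, (∑ j, a z j r * η j) *
                  wdz (fun z' => (starRingEnd ℂ) (bupF ainv b z' r)) z k)
              + betaF b z η *
                ∑ r, wdz (fun z' => (starRingEnd ℂ) (b z' r)) z k * (starRingEnd ℂ) (η r))
          * η k = 0)
        ↔ ∑ k, deltaF a ainv (babsF b) z η k * η k = 0) := by
  intro z η hη hβ
  have hbabs_ne : babsF b z η ≠ 0 := by
    unfold babsF
    exact_mod_cast Complex.ofReal_ne_zero.mpr (by simpa using (norm_ne_zero_iff.mpr hβ))
  have hcne : (1 : ℂ) / (2 * babsF b z η) ≠ 0 :=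
    one_div_ne_zero (mul_ne_zero two_ne_zero hbabs_ne)
  -- per-k formula for the delta of |β|
  have hdelta : ∀ k, deltaF a ainv (babsF b) z η k
      = (1 / (2 * babsF b z η)) *
          ((starRingEnd ℂ) (betaF b z η) *
              (∑ r, (∑ j, a z j r * η j) *
                wdz (fun z' => (starRingEnd ℂ) (bupF ainv b z' r)) z k)
            + betaF b z η *
              ∑ r, wdz (fun z' => (starRingEnd ℂ) (b z' r)) z k * (starRingEnd ℂ) (η r)) := by
    intro k
    have hbc := WTool.bup_contract hinv hherm hasmooth hbsmooth z η k
    simp only [deltaF]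
    rw [WTool.wdz_babs_z hbsmooth hβ k]
    have h1 : ∀ j, NconnF a ainv z η j k * wdz (babsF b z) η j
        = (1 / (2 * babsF b z η)) *
            (NconnF a ainv z η j k * ((starRingEnd ℂ) (betaF b z η) * b z j)) := by
      intro j
      rw [show (babsF b z) = fun v => babsF b z v from rfl,
        WTool.wdz_babs_eta hbsmooth hβ j]
      ring
    rw [Finset.sum_congr rfl fun j _ => h1 j, ← Finset.mul_sum]
    have h2 : ∑ j, NconnF a ainv z η j k * ((starRingEnd ℂ) (betaF b z η) * b z j)
        = (starRingEnd ℂ) (betaF b z η) * ∑ j, NconnF a ainv z η j k * b z j := by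
      rw [Finset.mul_sum]
      exact Finset.sum_congr rfl fun j _ => by ring
    rw [h2]
    linear_combination ((1 : ℂ) / (2 * babsF b z η)) * (starRingEnd ℂ) (betaF b z η) * hbc.symm
  have hsum2 : ∑ k, deltaF a ainv (babsF b) z η k * η k
      = (1 / (2 * babsF b z η)) *
          ∑ k, ((starRingEnd ℂ) (betaF b z η) *
                  (∑ r, (∑ j, a z j r * η j) *
                    wdz (fun z' => (starRingEnd ℂ) (bupF ainv b z' r)) z k)
                + betaF b z η *
                  ∑ r, wdz (fun z' => (starRingEnd ℂ) (b z' r)) z k * (starRingEnd ℂ) (η r))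
            * η k := by
    rw [Finset.mul_sum]
    exact Finset.sum_congr rfl fun k _ => by rw [hdelta k]; ring
  refine ⟨?_, hsum2, ?_⟩
  · refine Finset.sum_congr rfl fun k _ => ?_
    have e1 : wdz (fun z' => alphaF a z' η + babsF b z' η) z k
        = wdz (fun z' => alphaF a z' η) z k + wdz (fun z' => babsF b z' η) z k :=
      WTool.wdz_add (WTool.diffAt_alpha_z hasmooth hherm hpos z η hη)
        (WTool.diffAt_babs_z hbsmooth hβ) k
    have e2 : ∀ j, wdz (fun η' => alphaF a z η' + babsF b z η') η j
        = wdz (fun η' => alphaF a z η') η j + wdz (fun η' => babsF b z η') η j :=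
      fun j => WTool.wdz_add (WTool.diffAt_alpha_eta hasmooth hpos z η hη)
        (WTool.diffAt_babs_eta hβ) j
    have hsplit : deltaF a ainv (fun z' η' => alphaF a z' η' + babsF b z' η') z η k
        = deltaF a ainv (fun z' η' => alphaF a z' η') z η k
          + deltaF a ainv (babsF b) z η k := by
      simp only [deltaF]
      rw [e1]
      have e3 : ∑ j, NconnF a ainv z η j k *
            wdz (fun η' => alphaF a z η' + babsF b z η') η j
          = (∑ j, NconnF a ainv z η j k * wdz (fun η' => alphaF a z η') η j)
            + ∑ j, NconnF a ainv z η j k * wdz (babsF b z) η j := by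
        rw [← Finset.sum_add_distrib]
        refine Finset.sum_congr rfl fun j _ => ?_
        rw [e2 j]
        ring
      rw [e3]
      ring
    rw [hsplit,
      WTool.delta_alpha_zero hasmooth hherm hpos hinv z η hη k, zero_add]
  · constructor
    · intro h0
      rw [hsum2, h0, mul_zero]
    · intro h0
      rw [hsum2] at h0
      rcases mul_eq_zero.mp h0 with h | h
      · exact absurd h hcne
      · exact h

end Randers
end

section
/- Suppose the Randers spray satisfies G̃^i = Ĝ^i (spray of α), the Euclidean-projectivity equation G̃^i = (1/F̃)(∂F̃/∂z^k)η^k η^i holds, F̃ = α + |β| with ∂F̃/∂z^k = ∂α/∂z^k + ∂|β|/∂z^k, and moreover the generalized Berwald identity gives (∂|β|/∂z^k)η^k = (1/(2|β|))(2β̄ Ĝ^l b_l) along the relevant curves (i.e. (δ_k|β|)η^k = 0). Then contracting G̃^i = Ĝ^i with b_i yields Ĝ^i b_i = (β/α)(∂α/∂z^k)η^k, and substituting back gives Ĝ^i = (1/α)(∂α/∂z^k)η^k η^i, i.e. α is projectively related to the Euclidean metric. -/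
open Complex BigOperators ComplexConjugate

/-!
Both sprays are the multiple `c η` of the direction, `c = (∂F̃/∂z^k)η^k / F̃`, so contracting
with `b` gives `Ĝ^l b_l = c β`. The Berwald term then becomes `β̄ c β / |β| = |β| c`, and since
`(∂F̃/∂z^k)η^k = (α + |β|) c`, the hypothesis on it collapses to `α c = (∂α/∂z^k)η^k`.
-/

-- Also true for `z = 0`, where both sides are `0` by the junk value of division.
lemma Complex.conj_mul_self_div_norm (z : ℂ) : conj z * z / ‖z‖ = ‖z‖ := by
  rw [conj_mul', sq, mul_self_div_self]

theorem randers_euclidean_projectivity_general {n : ℕ}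
    (α : ℝ) (η b Ghat Gt dF dα : Fin n → ℂ)
    (hα : 0 < α)
    (hGtG : ∀ i, Gt i = Ghat i)
    (hproj : ∀ i, Gt i
      = (1 / ((α + ‖∑ i, b i * η i‖ : ℝ) : ℂ)) * (∑ k, dF k * η k) * η i)
    (hdF : ∑ k, dF k * η k
      = (∑ k, dα k * η k)
        + (1 / (2 * ((‖∑ i, b i * η i‖ : ℝ) : ℂ))) *
            (2 * (starRingEnd ℂ) (∑ i, b i * η i) * ∑ l, Ghat l * b l)) :
    (∑ i, Ghat i * b i = ((∑ i, b i * η i) / (α : ℂ)) * ∑ k, dα k * η k) ∧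
    (∀ i, Ghat i = (1 / (α : ℂ)) * (∑ k, dα k * η k) * η i) := by
  set β := ∑ i, b i * η i
  set A := ∑ k, dα k * η k
  set S := ∑ k, dF k * η k
  obtain ⟨c, hc_def⟩ : ∃ c : ℂ, c = 1 / ((α + ‖β‖ : ℝ) : ℂ) * S := ⟨_, rfl⟩
  have hGhat : ∀ i, Ghat i = c * η i := fun i => by rw [← hGtG, hproj, hc_def]
  have hcontract : ∑ i, Ghat i * b i = c * β := by
    simp only [hGhat, β, Finset.mul_sum]
    exact Finset.sum_congr rfl fun i _ => by ring
  have hα0 : (α : ℂ) ≠ 0 := mod_cast hα.ne'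
  have hS : S = (α + ‖β‖) * c := by
    have : ((α + ‖β‖ : ℝ) : ℂ) ≠ 0 := mod_cast (by positivity : 0 < α + ‖β‖).ne'
    rw [hc_def, ← ofReal_add, ← mul_assoc, mul_one_div_cancel this, one_mul]
  have hc : c = A / α := by
    rw [eq_div_iff hα0]
    rw [hcontract] at hdF
    linear_combination hdF - hS + c * conj_mul_self_div_norm β
  refine ⟨by rw [hcontract, hc]; ring, fun i => by rw [hGhat, hc]; ring⟩

/-- algebraic heart of the converse of Theorem 4.4: if `G̃^i = Ĝ^i`,
`G̃^i = (1/F̃)(∂F̃/∂z^k)η^k η^i` with `F̃ = α + |β|`, and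
`(∂F̃/∂z^k)η^k = (∂α/∂z^k)η^k + (1/(2|β|)) · 2β̄ Ĝ^l b_l`, then contracting with `b_i`
gives `Ĝ^i b_i = (β/α)(∂α/∂z^k)η^k` and hence `Ĝ^i = (1/α)(∂α/∂z^k)η^k η^i`. -/
theorem randers_euclidean_projectivity {n : ℕ}
    (α : ℝ) (η b Ghat Gt dF dα : Fin n → ℂ)
    (hα : 0 < α)
    (hβ : (∑ i, b i * η i) ≠ 0)
    (hGtG : ∀ i, Gt i = Ghat i)
    (hproj : ∀ i, Gt i
      = (1 / ((α + ‖∑ i, b i * η i‖ : ℝ) : ℂ)) * (∑ k, dF k * η k) * η i)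
    (hdF : ∑ k, dF k * η k
      = (∑ k, dα k * η k)
        + (1 / (2 * ((‖∑ i, b i * η i‖ : ℝ) : ℂ))) *
            (2 * (starRingEnd ℂ) (∑ i, b i * η i) * ∑ l, Ghat l * b l)) :
    (∑ i, Ghat i * b i = ((∑ i, b i * η i) / (α : ℂ)) * ∑ k, dα k * η k) ∧
    (∀ i, Ghat i = (1 / (α : ℂ)) * (∑ k, dα k * η k) * η i) :=
  randers_euclidean_projectivity_general α η b Ghat Gt dF dα hα hGtG hproj hdF
end
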